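/- arXiv:2005.11551 — 8 statements merged into one kernel-verified Lean document; each statement's English description precedes it below -/
import Mathlib

section
/- Let C and D be categories with a dual adjunction given by Spc : D ⥤ Cᵒᵖ left adjoint to Pred : Cᵒᵖ ⥤ D with hom-set equivalence θ. Let O be an object of D, let I and X be objects of C, let i : I ⟶ X and f : X ⟶ (Spc O).unop be morphisms in C, and let t₁, …, tₖ : X ⟶ X be a finite list of endomorphisms of X. Then the adjoint transpose O ⟶ Pred(op I) of the composite i ≫ t₁ ≫ ⋯ ≫ tₖ ≫ f : I ⟶ (Spc O).unop equals the composite (adjoint transpose of f) ≫ Pred.map tₖ.op ≫ ⋯ ≫ Pred.map t₁.op ≫ Pred.map i.op. In other words, the dual adjoint functors reverse the word of transition morphisms, so they reverse the language accepted by an automaton. -/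
open CategoryTheory Opposite

namespace CategoryTheory

variable {C : Type*} [Category C] {D : Type*} [Category D] {X : C}

lemma foldr_comp_eq_foldr_comp_id_comp {Y : C} (l : List (X ⟶ X)) (b : X ⟶ Y) :
    l.foldr (· ≫ ·) b = l.foldr (· ≫ ·) (𝟙 X) ≫ b := by
  induction l with
  | nil => simp
  | cons t l ih => simp [ih]

lemma foldr_comp_append (l₁ l₂ : List (X ⟶ X)) :
    (l₁ ++ l₂).foldr (· ≫ ·) (𝟙 X) = l₁.foldr (· ≫ ·) (𝟙 X) ≫ l₂.foldr (· ≫ ·) (𝟙 X) := by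
  rw [List.foldr_append, foldr_comp_eq_foldr_comp_id_comp]

lemma op_foldr_comp (l : List (X ⟶ X)) :
    (l.foldr (· ≫ ·) (𝟙 X)).op = (l.reverse.map Quiver.Hom.op).foldr (· ≫ ·) (𝟙 (op X)) := by
  induction l with
  | nil => rfl
  | cons t l ih =>
    rw [List.reverse_cons, List.map_append, foldr_comp_append, ← ih]
    simp

lemma Functor.map_foldr_comp (F : C ⥤ D) (l : List (X ⟶ X)) :
    F.map (l.foldr (· ≫ ·) (𝟙 X)) = (l.map F.map).foldr (· ≫ ·) (𝟙 (F.obj X)) := by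
  induction l with
  | nil => simp
  | cons t l ih => simp [ih]

end CategoryTheory

/-- For a dual adjunction `Spc ⊣ Pred` between `C` and `D` (with
`Spc : D ⥤ Cᵒᵖ`) with hom-set equivalence `θ`, an object `O` of `D`, morphisms
`i : I ⟶ X` and `f : X ⟶ (Spc O).unop` in `C` and a finite list `ts = [t₁, …, tₖ]` of
endomorphisms of `X`, the adjoint transpose `O ⟶ Pred (op I)` of the composite
`i ≫ t₁ ≫ ⋯ ≫ tₖ ≫ f` equals
`(adjoint transpose of f) ≫ Pred.map tₖ.op ≫ ⋯ ≫ Pred.map t₁.op ≫ Pred.map i.op`: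
the dual adjoint functors reverse the word of transition morphisms, hence reverse the
language accepted by an automaton. -/
theorem stmt_1 {C : Type*} [Category C] {D : Type*} [Category D]
    (Spc : D ⥤ Cᵒᵖ) (Pred : Cᵒᵖ ⥤ D) (adj : Spc ⊣ Pred)
    {I X : C} (O : D) (i : I ⟶ X) (f : X ⟶ (Spc.obj O).unop)
    (ts : List (X ⟶ X)) :
    adj.homEquiv O (op I)
        (Quiver.Hom.op (i ≫ ts.foldr (· ≫ ·) (𝟙 X) ≫ f)) =
      adj.homEquiv O (op X) (Quiver.Hom.op f) ≫
        (ts.reverse.foldr (fun t acc => Pred.map t.op ≫ acc) (𝟙 (Pred.obj (op X)))) ≫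
        Pred.map i.op := by
  rw [op_comp, op_comp, adj.homEquiv_naturality_right, adj.homEquiv_naturality_right,
    op_foldr_comp, Pred.map_foldr_comp, List.map_map, List.foldr_map, Category.assoc]
  rfl
end

section
/- Let 𝒜 = (X, δ, x₀, F) be a deterministic automaton over an alphabet Σ that is reachable, i.e., for every x : X there exists w : List Σ with δ* w x₀ = x. Then the reversed subset automaton det(rev(𝒜)) is observable: for all S S' : Set X, if for every word w : List Σ one has x₀ ∈ Δ* w S ↔ x₀ ∈ Δ* w S', then S = S'. (The reachable part on the dual side yields an observable automaton.) -/
/-! Reading a word in the reversed subset automaton pulls a set back along the original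
automaton read in reverse: `x ∈ Δ* w S ↔ δ* (reverse w) x ∈ S`. Hence two states `S, S'` with
the same language contain the same states `δ* w x₀`, and by reachability these are all of `X`. -/

lemma mem_foldl_preimage_iff {A X : Type*} (δ : A → X → X) (w : List A) (S : Set X) (x : X) :
    x ∈ w.foldl (fun S a => {x | δ a x ∈ S}) S ↔ w.foldr δ x ∈ S := by
  induction w generalizing S with
  | nil => rfl
  | cons a w ih => exact ih _

theorem stmt_6_general {A X : Type*} (δ : A → X → X) (x₀ : X)
    (hreach : ∀ x : X, ∃ w : List A, w.foldl (fun x a => δ a x) x₀ = x)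
    (S S' : Set X)
    (h : ∀ w : List A,
        x₀ ∈ w.foldl (fun S a => {x | δ a x ∈ S}) S ↔
        x₀ ∈ w.foldl (fun S a => {x | δ a x ∈ S}) S') :
    S = S' := by
  ext x
  obtain ⟨w, rfl⟩ := hreach x
  simpa only [mem_foldl_preimage_iff, List.foldr_reverse] using h w.reverse

/-- If the deterministic automaton `(X, δ, x₀, F)` is reachable, then the
reversed subset automaton (with transitions `Δ a S = {x | δ a x ∈ S}` and initial state
`F`) is observable: two states `S S' : Set X` accepting the same language are equal. -/
theorem stmt_6 {A X : Type*} (δ : A → X → X) (x₀ : X) (F : Set X)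
    (hreach : ∀ x : X, ∃ w : List A, w.foldl (fun x a => δ a x) x₀ = x)
    (S S' : Set X)
    (h : ∀ w : List A,
        x₀ ∈ w.foldl (fun S a => {x | δ a x ∈ S}) S ↔
        x₀ ∈ w.foldl (fun S a => {x | δ a x ∈ S}) S') :
    S = S' :=
  stmt_6_general δ x₀ hreach S S' h
end

section
/- Correctness of Brzozowski's double-reversal algorithm: let 𝒜 = (X, δ, x₀, F) be a deterministic automaton over an alphabet Σ. Let B(𝒜) denote the reachable part of the reversed subset automaton det(rev(𝒜)): its state type is the subtype {S : Set X // ∃ w : List Σ, Δ* w F = S}, its transitions, initial state and accepting states are those of det(rev(𝒜)) restricted to this subtype (well defined since Δ a (Δ* w F) = Δ* (w ++ [a]) F). Then the deterministic automaton B(B(𝒜)) is reachable (every state is reached from the initial state by some word), observable (any two states accepting the same language are equal), and accepts exactly the language L(𝒜) accepted by 𝒜; i.e., B(B(𝒜)) is a minimal deterministic automaton for L(𝒜). -/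
/-!
A state `S` of `rev M` accepts `w` iff `δ* (reverse w) x₀ ∈ S`. Hence `rev` reverses the
language, and if every state of `M` is reachable, two subsets accepting the same words contain
the same states: `rev M` is observable. Passing to the reachable part keeps the language and
observability, so `B(B(M))` is reachable, observable, and accepts the reverse of the reverse
of `L(M)`.
-/

universe u v

/-- A deterministic automaton over an alphabet `A`: a type of states, transitions,
an initial state, and a set of accepting states. -/
structure DetAut (A : Type u) : Type (max u (v + 1)) where
  State : Type v
  tr : A → State → State
  init : State
  acc : Set State

namespace DetAut

variable {A : Type u}

/-- Extended transition map: `δ* w x = w.foldl (fun x a => δ a x) x`. -/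
def steps (M : DetAut.{u, v} A) (w : List A) (x : M.State) : M.State :=
  w.foldl (fun x a => M.tr a x) x

/-- The language accepted by a deterministic automaton. -/
def lang (M : DetAut.{u, v} A) : Set (List A) :=
  {w | M.steps w M.init ∈ M.acc}

/-- The reversed subset automaton `det(rev(M))`: states are subsets of states of `M`,
transitions are `Δ a S = {x | δ a x ∈ S}`, the initial state is the set of accepting
states of `M`, and a subset is accepting iff it contains the initial state of `M`. -/
def rev (M : DetAut.{u, v} A) : DetAut.{u, v} A where
  State := Set M.State
  tr a S := {x | M.tr a x ∈ S}
  init := M.acc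
  acc := {S | M.init ∈ S}

/-- The reachable part of a deterministic automaton: states reachable from the initial
state by some word, with the restricted transitions, initial state and accepting
states.  (Well defined since `δ* (w ++ [a]) x₀ = δ a (δ* w x₀)`.) -/
def reach (M : DetAut.{u, v} A) : DetAut.{u, v} A where
  State := {x : M.State // ∃ w : List A, M.steps w M.init = x}
  tr a x := ⟨M.tr a x.1, by
    obtain ⟨w, hw⟩ := x.2
    refine ⟨w ++ [a], ?_⟩
    simp only [steps, List.foldl_append, List.foldl_cons, List.foldl_nil]
    rw [show List.foldl (fun x a => M.tr a x) M.init w = x.1 from hw]⟩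
  init := ⟨M.init, ⟨[], rfl⟩⟩
  acc := {x | x.1 ∈ M.acc}

variable (M : DetAut.{u, v} A)

def Reachable : Prop :=
  ∀ x : M.State, ∃ w : List A, M.steps w M.init = x

def Observable : Prop :=
  ∀ x y : M.State, (∀ w : List A, M.steps w x ∈ M.acc ↔ M.steps w y ∈ M.acc) → x = y

theorem steps_append (w w' : List A) (x : M.State) :
    M.steps (w ++ w') x = M.steps w' (M.steps w x) :=
  List.foldl_append

theorem reach_steps_val (w : List A) (x : M.reach.State) :
    (M.reach.steps w x).1 = M.steps w x.1 := by
  induction w generalizing x with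
  | nil => rfl
  | cons a w ih => exact ih (M.reach.tr a x)

theorem reach_steps_mem_acc (w : List A) (x : M.reach.State) :
    M.reach.steps w x ∈ M.reach.acc ↔ M.steps w x.1 ∈ M.acc := by
  rw [← reach_steps_val]
  rfl

theorem rev_steps_mem_acc (w : List A) (S : Set M.State) :
    M.rev.steps w S ∈ M.rev.acc ↔ M.steps w.reverse M.init ∈ S := by
  induction w generalizing S with
  | nil => rfl
  | cons a w ih =>
    rw [List.reverse_cons, steps_append]
    exact ih {x | M.tr a x ∈ S}

theorem reachable_reach : M.reach.Reachable := fun x => by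
  obtain ⟨w, hw⟩ := x.2
  exact ⟨w, Subtype.ext (by rw [reach_steps_val, ← hw]; rfl)⟩

theorem Observable.reach {M : DetAut.{u, v} A} (hM : M.Observable) : M.reach.Observable :=
  fun x y h => Subtype.ext <| hM x.1 y.1 fun w => by
    simpa only [reach_steps_mem_acc] using h w

theorem Reachable.observable_rev {M : DetAut.{u, v} A} (hM : M.Reachable) : M.rev.Observable :=
  fun S S' h => Set.ext fun x => by
    obtain ⟨v, rfl⟩ := hM x
    simpa only [List.reverse_reverse] using
      (M.rev_steps_mem_acc v.reverse S).symm.trans ((h v.reverse).trans (M.rev_steps_mem_acc _ S'))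

theorem lang_reach : M.reach.lang = M.lang :=
  Set.ext fun w => M.reach_steps_mem_acc w M.reach.init

theorem lang_rev : M.rev.lang = {w | w.reverse ∈ M.lang} :=
  Set.ext fun w => M.rev_steps_mem_acc w M.acc

end DetAut

/-- Correctness of Brzozowski's double-reversal algorithm.  With
`B(M) = reach (rev M)` the reachable part of the reversed subset automaton of `M`,
the automaton `B(B(M))` is reachable, observable, and accepts exactly the language
of `M`; i.e. `B(B(M))` is a minimal deterministic automaton for the language of `M`. -/
theorem stmt_7 {A : Type u} (M : DetAut.{u, v} A) :
    (∀ s : (M.rev.reach.rev.reach).State,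
        ∃ w : List A, (M.rev.reach.rev.reach).steps w (M.rev.reach.rev.reach).init = s) ∧
    (∀ s s' : (M.rev.reach.rev.reach).State,
        (∀ w : List A,
            (M.rev.reach.rev.reach).steps w s ∈ (M.rev.reach.rev.reach).acc ↔
            (M.rev.reach.rev.reach).steps w s' ∈ (M.rev.reach.rev.reach).acc) →
          s = s') ∧
    (M.rev.reach.rev.reach).lang = M.lang := by
  refine ⟨DetAut.reachable_reach _, (DetAut.reachable_reach M.rev).observable_rev.reach, ?_⟩
  ext w
  simp only [DetAut.lang_reach, DetAut.lang_rev, Set.mem_ofPred_eq, List.reverse_reverse]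
end

section
/- Let R be a principal ideal domain (a commutative integral domain in which every ideal is principal) and let Σ be a type. For every R-weighted automaton (i, t, f) with n states recognizing the formal power series L : List Σ → R, there exist a natural number m ≤ n and an R-weighted automaton (i', t', f') with m states that recognizes the same series L and is both reachable and observable. In other words, the minimal weighted automaton over a principal ideal domain exists and has a state space of size at most that of the original automaton. -/
/-!
The left quotients `u ↦ L (w ++ u)` of the series `L` span a submodule `H` of `List A → R` (its
Hankel module) that is stable under the shifts `g ↦ (u ↦ g (a :: u))`. With the shifts as
transitions, `L` as initial state and evaluation at the empty word as output, `H` is an automaton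
recognizing `L`: its runs are the left quotients, so it is reachable, and the series observed
from a state `g` is `g` itself, so it is observable. Each left quotient of `L` is the series
observed from a run vector of the given automaton, so `H` lies in the image of a linear map
`Rⁿ → (List A → R)`; over a PID this makes `H` free of rank at most `n`, and a basis of `H` turns
it into a matrix automaton.
-/

open Matrix

section MatrixOfBasis

variable {R M ι A : Type*} [CommRing R] [AddCommGroup M] [Module R M] [Fintype ι]

theorem Module.Basis.foldl_toMatrix_mulVec_equivFun [DecidableEq ι] (b : Module.Basis ι R M)
    (T : A → M →ₗ[R] M) (w : List A) (x : M) :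
    w.foldl (fun v a => LinearMap.toMatrix b b (T a) *ᵥ v) (b.equivFun x) =
      b.equivFun (w.foldl (fun y a => T a y) x) :=
  List.foldl_hom _ fun y a => by
    simp only [Module.Basis.equivFun_apply, LinearMap.toMatrix_mulVec_repr]

theorem Module.Basis.dotProduct_equivFun (b : Module.Basis ι R M) (φ : M →ₗ[R] R) (x : M) :
    (fun j => φ (b j)) ⬝ᵥ b.equivFun x = φ x := by
  conv_rhs => rw [← b.sum_equivFun x, map_sum]
  simp only [dotProduct, map_smul, smul_eq_mul, mul_comm]

end MatrixOfBasis

namespace WordSeries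

variable {R A : Type*} [CommRing R]

def leftQuotient (L : List A → R) (w : List A) : List A → R := fun u => L (w ++ u)

def shift (a : A) : (List A → R) →ₗ[R] (List A → R) := LinearMap.funLeft R R (List.cons a)

theorem foldl_shift (w : List A) (L : List A → R) :
    w.foldl (fun g a => shift a g) L = leftQuotient L w := by
  induction w generalizing L with
  | nil => rfl
  | cons a w ih => rw [List.foldl_cons, ih]; rfl

def hankelSpan (L : List A → R) : Submodule R (List A → R) :=
  Submodule.span R (Set.range (leftQuotient L))

theorem leftQuotient_mem_hankelSpan (L : List A → R) (w : List A) :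
    leftQuotient L w ∈ hankelSpan L :=
  Submodule.subset_span ⟨w, rfl⟩

theorem shift_mem_hankelSpan (L : List A → R) (a : A) {g : List A → R} (hg : g ∈ hankelSpan L) :
    shift a g ∈ hankelSpan L := by
  have hle : (hankelSpan L).map (shift a) ≤ hankelSpan L :=
    (Submodule.map_span_le _ _ _).2 fun _ ⟨w, hw⟩ => by
      have : shift a (leftQuotient L w) = leftQuotient L (w ++ [a]) :=
        funext fun u => by simp [shift, leftQuotient]
      rw [← hw, this]
      exact leftQuotient_mem_hankelSpan L _
  exact hle ⟨g, hg, rfl⟩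

def hankelShift (L : List A → R) (a : A) : hankelSpan L →ₗ[R] hankelSpan L :=
  (shift a).restrict fun _ => shift_mem_hankelSpan L a

theorem coe_foldl_hankelShift (L : List A → R) (w : List A) (g : hankelSpan L) :
    ((w.foldl (fun y a => hankelShift L a y) g : hankelSpan L) : List A → R) =
      leftQuotient g w := by
  rw [← foldl_shift]
  exact (List.foldl_hom Subtype.val (g₁ := fun y a => hankelShift L a y)
    (g₂ := fun g a => shift a g) fun _ _ => rfl).symm

theorem exists_reachable_observable_of_basis {m : ℕ} (L : List A → R)
    (b : Module.Basis (Fin m) R (hankelSpan L)) :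
    ∃ (i' f' : Fin m → R) (t' : A → Matrix (Fin m) (Fin m) R),
      (∀ w : List A, f' ⬝ᵥ (w.foldl (fun v a => t' a *ᵥ v) i') = L w) ∧
      Submodule.span R (Set.range fun w : List A => w.foldl (fun v a => t' a *ᵥ v) i') = ⊤ ∧
      Function.Injective (fun (v : Fin m → R) (w : List A) =>
        f' ⬝ᵥ (w.foldl (fun u a => t' a *ᵥ u) v)) := by
  let L₀ : hankelSpan L := ⟨L, leftQuotient_mem_hankelSpan L []⟩
  let t' a := LinearMap.toMatrix b b (hankelShift L a)
  let f' j := (b j : List A → R) []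
  let run (w : List A) : hankelSpan L := w.foldl (fun y a => hankelShift L a y) L₀
  have observe (g : hankelSpan L) (w : List A) :
      f' ⬝ᵥ (w.foldl (fun v a => t' a *ᵥ v) (b.equivFun g)) = (g : List A → R) w := by
    rw [b.foldl_toMatrix_mulVec_equivFun]
    refine (b.dotProduct_equivFun ((LinearMap.proj []).comp (hankelSpan L).subtype) _).trans ?_
    simp [coe_foldl_hankelShift, leftQuotient]
  have span_run : Submodule.span R (Set.range run) = ⊤ := by
    have : Set.range run = Subtype.val ⁻¹' Set.range (leftQuotient L) := by
      ext g
      simp only [Set.mem_range, Set.mem_preimage, Subtype.ext_iff, run, coe_foldl_hankelShift]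
      rfl
    rw [this]
    exact Submodule.span_span_coe_preimage
  refine ⟨b.equivFun L₀, f', t', observe L₀, ?_, ?_⟩
  · have : (fun w => w.foldl (fun v a => t' a *ᵥ v) (b.equivFun L₀)) = b.equivFun ∘ run :=
      funext fun w => b.foldl_toMatrix_mulVec_equivFun _ w L₀
    rw [this, Set.range_comp, ← LinearEquiv.coe_toLinearMap, Submodule.span_image, span_run,
      Submodule.map_top, LinearEquiv.range]
  · have : (fun (v : Fin m → R) (w : List A) => f' ⬝ᵥ (w.foldl (fun u a => t' a *ᵥ u) v)) =
        Subtype.val ∘ b.equivFun.symm :=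
      funext fun v => funext fun w => by
        change _ = ((b.equivFun.symm v : hankelSpan L) : List A → R) w
        rw [← observe, b.equivFun.apply_symm_apply]
    rw [this]
    exact Subtype.val_injective.comp b.equivFun.symm.injective

end WordSeries

section MatrixAutomaton

variable {R A ι : Type*} [CommRing R] [Fintype ι] [DecidableEq ι]

def wordMatrix (t : A → Matrix ι ι R) (w : List A) : Matrix ι ι R :=
  w.foldl (fun M a => t a * M) 1

theorem foldl_mulVec_eq_wordMatrix_mulVec (t : A → Matrix ι ι R) (w : List A)
    (v : ι → R) : w.foldl (fun u a => t a *ᵥ u) v = wordMatrix t w *ᵥ v := by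
  rw [wordMatrix, ← List.foldl_hom (· *ᵥ v) (g₂ := fun u a => t a *ᵥ u)
    fun M a => mulVec_mulVec v (t a) M, one_mulVec]

def observation (f : ι → R) (t : A → Matrix ι ι R) :
    (ι → R) →ₗ[R] (List A → R) :=
  LinearMap.pi fun w => dotProductBilin R R f ∘ₗ (wordMatrix t w).mulVecLin

theorem observation_apply (f : ι → R) (t : A → Matrix ι ι R) (v : ι → R)
    (w : List A) : observation f t v w = f ⬝ᵥ w.foldl (fun u a => t a *ᵥ u) v := by
  simp [observation, foldl_mulVec_eq_wordMatrix_mulVec]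

theorem hankelSpan_le_range_observation (i f : ι → R) (t : A → Matrix ι ι R) :
    WordSeries.hankelSpan (fun w => f ⬝ᵥ w.foldl (fun v a => t a *ᵥ v) i) ≤
      LinearMap.range (observation f t) :=
  Submodule.span_le.2 <| Set.range_subset_iff.2 fun w =>
    ⟨w.foldl (fun v a => t a *ᵥ v) i, funext fun u => by
      simp [observation_apply, WordSeries.leftQuotient, List.foldl_append]⟩

end MatrixAutomaton

theorem Submodule.finite_free_finrank_le_of_le_range {R M N : Type*} [CommRing R] [IsDomain R]
    [IsPrincipalIdealRing R] [AddCommGroup M] [Module R M] [Module.Finite R M] [AddCommGroup N]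
    [Module R N] [Module.IsTorsionFree R N] {W : Submodule R N} {φ : M →ₗ[R] N}
    (h : W ≤ LinearMap.range φ) :
    Module.Finite R W ∧ Module.Free R W ∧ Module.finrank R W ≤ Module.finrank R M := by
  have : Module.Finite R W :=
    Module.Finite.iff_fg.2 ((Module.Finite.iff_fg.1 inferInstance).of_le h)
  exact ⟨this, Module.free_of_finite_type_torsion_free',
    (Submodule.finrank_mono h).trans (LinearMap.finrank_range_le φ)⟩

/-- Over a principal ideal domain `R`, every `R`-weighted automaton
`(i, t, f)` with `n` states recognizing the formal power series `L : List A → R`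
admits an equivalent `R`-weighted automaton with `m ≤ n` states recognizing the same
series which is both reachable (the runs span the whole state space) and observable
(the observation map into series is injective): the minimal weighted automaton over a
PID exists and has a state space of size at most that of the original automaton. -/
theorem stmt_8 {R : Type*} [CommRing R] [IsDomain R] [IsPrincipalIdealRing R]
    (A : Type*) (n : ℕ) (i f : Fin n → R) (t : A → Matrix (Fin n) (Fin n) R) :
    ∃ m : ℕ, m ≤ n ∧
      ∃ (i' f' : Fin m → R) (t' : A → Matrix (Fin m) (Fin m) R),
        (∀ w : List A,
            f' ⬝ᵥ (w.foldl (fun v a => t' a *ᵥ v) i') =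
            f ⬝ᵥ (w.foldl (fun v a => t a *ᵥ v) i)) ∧
        Submodule.span R (Set.range fun w : List A => w.foldl (fun v a => t' a *ᵥ v) i') = ⊤ ∧
        Function.Injective (fun (v : Fin m → R) (w : List A) =>
          f' ⬝ᵥ (w.foldl (fun u a => t' a *ᵥ u) v)) := by
  obtain ⟨_, _, hrank⟩ :=
    Submodule.finite_free_finrank_le_of_le_range (hankelSpan_le_range_observation i f t)
  rw [Module.finrank_fin_fun] at hrank
  exact ⟨_, hrank, WordSeries.exists_reachable_observable_of_basis _ (Module.finBasis R _)⟩
end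

section
/- For every alternating finite automaton 𝒜 = (X, δ, ι, F) over an alphabet Σ, the reversed deterministic automaton 𝒜' accepts exactly the reverse of the language of 𝒜: for every word w : List Σ, T w F ∈ ι if and only if δ' w.reverse F ∈ ι; that is, L(𝒜') = {w : List Σ | w.reverse ∈ L(𝒜)}. -/
/-- Backward run map of an alternating finite automaton:
`δ' [] A = A` and `δ' (a :: w) A = {s | δ' w A ∈ δ a s}`. -/
def afaBack {A X : Type*} (δ : A → X → Set (Set X)) : List A → Set X → Set X
  | [], S => S
  | a :: w, S => {s | afaBack δ w S ∈ δ a s}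

theorem afaBack_eq_foldr {A X : Type*} (δ : A → X → Set (Set X)) (w : List A) (S : Set X) :
    afaBack δ w S = w.foldr (fun a S => {x | S ∈ δ a x}) S := by
  induction w with
  | nil => rfl
  | cons a w ih => simp only [afaBack, List.foldr_cons, ih]

theorem foldl_eq_afaBack_reverse {A X : Type*} (δ : A → X → Set (Set X)) (w : List A)
    (S : Set X) : w.foldl (fun S a => {x | S ∈ δ a x}) S = afaBack δ w.reverse S := by
  rw [afaBack_eq_foldr, List.foldl_eq_foldr_reverse]

/-- For every alternating finite automaton `(X, δ, ι, F)`, the reversed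
deterministic automaton accepts exactly the reverse of the language of the AFA:
for every word `w`, `T w F ∈ ι ↔ δ' w.reverse F ∈ ι`, i.e.
`L(𝒜') = {w | w.reverse ∈ L(𝒜)}`. -/
theorem stmt_10 {A X : Type*} (δ : A → X → Set (Set X)) (ι : Set (Set X)) (F : Set X) :
    (∀ w : List A, w.foldl (fun S a => {x | S ∈ δ a x}) F ∈ ι ↔ afaBack δ w.reverse F ∈ ι) ∧
    {w : List A | w.foldl (fun S a => {x | S ∈ δ a x}) F ∈ ι} =
      {w : List A | w.reverse ∈ {u : List A | afaBack δ u F ∈ ι}} := by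
  have accepts_iff (w : List A) :
      w.foldl (fun S a => {x | S ∈ δ a x}) F ∈ ι ↔ afaBack δ w.reverse F ∈ ι := by
    rw [foldl_eq_afaBack_reverse]
  exact ⟨accepts_iff, Set.ext accepts_iff⟩
end

section
/- For every finite type Y, the assignment sending a subdistribution φ ∈ SubD(Y) to the ℝ-algebra homomorphism M ⧸ J →ₐ[ℝ] ℝ induced by evaluation of continuous functions at the point φ of K (this is well defined because every element of the ideal J vanishes at every subdistribution) is a bijection between SubD(Y) and the set of all ℝ-algebra homomorphisms M ⧸ J →ₐ[ℝ] ℝ; its inverse sends a homomorphism Φ to the subdistribution y ↦ Φ(π_y + J). -/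
/-!
By Gelfand duality for the compact Hausdorff space `K`, every character of `C(K, ℝ)` is evaluation
at a unique point, so the characters of `C(K, ℝ) ⧸ J` are the evaluations at the points where the
generator `|1 - π| - (1 - π)` of `J` vanishes, i.e. where `1 - π ≥ 0`: the subdistributions.
-/

namespace ContinuousMap

section Quotient

variable {X 𝕜 : Type*} [TopologicalSpace X] [RCLike 𝕜]

def quotientEvalAlgHom (J : Ideal C(X, 𝕜)) (x : X) (hx : ∀ f ∈ J, f x = 0) :
    C(X, 𝕜) ⧸ J →ₐ[𝕜] 𝕜 :=
  Ideal.Quotient.liftₐ J (evalAlgHom 𝕜 𝕜 x) hx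

@[simp]
theorem quotientEvalAlgHom_mk (J : Ideal C(X, 𝕜)) (x : X) (hx : ∀ f ∈ J, f x = 0)
    (f : C(X, 𝕜)) : quotientEvalAlgHom J x hx (Ideal.Quotient.mk J f) = f x :=
  rfl

variable [CompactSpace X] [T2Space X]

theorem eq_of_forall_apply_eq {x y : X} (h : ∀ f : C(X, 𝕜), f x = f y) : x = y :=
  (WeakDual.CharacterSpace.continuousMapEval_bijective X 𝕜).1 <| Subtype.ext <|
    ContinuousLinearMap.ext h

theorem exists_algHom_eq_evalAlgHom (ψ : C(X, 𝕜) →ₐ[𝕜] 𝕜) : ∃ x, ψ = evalAlgHom 𝕜 𝕜 x := by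
  obtain ⟨x, hx⟩ := (WeakDual.CharacterSpace.continuousMapEval_bijective X 𝕜).2
    (WeakDual.CharacterSpace.equivAlgHom.symm ψ)
  exact ⟨x, AlgHom.ext fun f => (DFunLike.congr_fun (congrArg Subtype.val hx) f).symm⟩

theorem quotientEvalAlgHom_bijective (J : Ideal C(X, 𝕜)) :
    Function.Bijective fun x : {x : X // ∀ f ∈ J, f x = 0} => quotientEvalAlgHom J x.1 x.2 := by
  refine ⟨fun x y hxy => Subtype.ext <| eq_of_forall_apply_eq (𝕜 := 𝕜) fun f => ?_, fun Φ => ?_⟩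
  · exact DFunLike.congr_fun hxy (Ideal.Quotient.mk J f)
  · obtain ⟨x, hx⟩ := exists_algHom_eq_evalAlgHom (Φ.comp (Ideal.Quotient.mkₐ 𝕜 J))
    have hJ : ∀ f ∈ J, f x = 0 := fun f hf =>
      calc f x = Φ (Ideal.Quotient.mk J f) := (DFunLike.congr_fun hx f).symm
        _ = 0 := by rw [Ideal.Quotient.eq_zero_iff_mem.2 hf, map_zero]
    exact ⟨⟨x, hJ⟩, Ideal.Quotient.algHom_ext 𝕜 <|
      AlgHom.ext fun f => (DFunLike.congr_fun hx f).symm⟩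

end Quotient

theorem forall_mem_span_singleton_apply_eq_zero_iff {X R : Type*} [TopologicalSpace X]
    [CommSemiring R] [TopologicalSpace R] [IsTopologicalSemiring R] (g : C(X, R)) (x : X) :
    (∀ f ∈ Ideal.span {g}, f x = 0) ↔ g x = 0 := by
  refine ⟨fun h => h g (Ideal.subset_span rfl), fun hg f hf => ?_⟩
  obtain ⟨c, rfl⟩ := Ideal.mem_span_singleton'.1 hf
  simp [hg]

end ContinuousMap

/-- Let `Y` be a finite type, `K := Y → unitInterval`, `M := C(K, ℝ)`,
`π_y : M` the projections, `π := ∑ y, π_y`, and `J` the ideal of `M` generated by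
`|1 - π| - (1 - π)`.  The assignment sending a subdistribution `φ` on `Y` to the
ℝ-algebra homomorphism `M ⧸ J →ₐ[ℝ] ℝ` induced by evaluation at the point `φ` of `K`
(well defined since every element of `J` vanishes at every subdistribution) is a
bijection between the subdistributions on `Y` and the ℝ-algebra homomorphisms
`M ⧸ J →ₐ[ℝ] ℝ`, with inverse sending `Φ` to the subdistribution `y ↦ Φ (π_y + J)`. -/
theorem stmt_13 (Y : Type) [Fintype Y] :
    let K := Y → unitInterval
    let M := C(K, ℝ)
    let proj : Y → M := fun y =>
      ⟨fun v => (v y : ℝ), continuous_subtype_val.comp (continuous_apply y)⟩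
    let pi : M := ∑ y, proj y
    let J : Ideal M := Ideal.span {|1 - pi| - (1 - pi)}
    ∃ e : {φ : Y → unitInterval // ∑ y, (φ y : ℝ) ≤ 1} → ((M ⧸ J) →ₐ[ℝ] ℝ),
      (∀ (φ : {φ : Y → unitInterval // ∑ y, (φ y : ℝ) ≤ 1}) (m : M),
          e φ (Ideal.Quotient.mk J m) = m φ.1) ∧
      Function.Bijective e ∧
      (∀ (φ : {φ : Y → unitInterval // ∑ y, (φ y : ℝ) ≤ 1}) (y : Y),
          (φ.1 y : ℝ) = e φ (Ideal.Quotient.mk J (proj y))) := by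
  intro K M proj pi J
  have hJ : ∀ x : K, (∀ f ∈ J, f x = 0) ↔ ∑ y, (x y : ℝ) ≤ 1 := fun x => by
    have hpi : pi x = ∑ y, (x y : ℝ) := ContinuousMap.sum_apply _ _ _
    have hg : (|1 - pi| - (1 - pi)) x = |1 - pi x| - (1 - pi x) := rfl
    rw [ContinuousMap.forall_mem_span_singleton_apply_eq_zero_iff, hg, sub_eq_zero, abs_eq_self,
      sub_nonneg, hpi]
  refine ⟨fun φ => ContinuousMap.quotientEvalAlgHom J φ.1 ((hJ φ.1).2 φ.2),
    fun φ m => ContinuousMap.quotientEvalAlgHom_mk J _ _ m, ?_,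
    fun φ y => (ContinuousMap.quotientEvalAlgHom_mk J _ _ (proj y)).symm⟩
  have hbij := (ContinuousMap.quotientEvalAlgHom_bijective J).comp
    (Equiv.subtypeEquivRight fun x => (hJ x).symm).bijective
  exact hbij
end

section
/- For every deterministic Kripke model (S, δ, γ) over actions Σ and observations Ω, and every modal formula φ, the definable set ⟦φ⟧ belongs to the smallest collection of subsets of S that contains every trace-definable subset and Set.univ and is closed under complements and binary intersections. Hence the Boolean algebra of modally definable subsets of S is generated by the trace-definable subsets, i.e., trace logic is as expressive as the full modal logic over deterministic Kripke models. -/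
/-- Modal formulas over actions `A` and observations `Ω`:
`φ ::= ω | ⟨a⟩φ | ⊤ | φ ∧ ψ | ¬φ`. -/
inductive MF (A Ω : Type*) : Type _ where
  | obs : Ω → MF A Ω
  | dia : A → MF A Ω → MF A Ω
  | top : MF A Ω
  | and : MF A Ω → MF A Ω → MF A Ω
  | not : MF A Ω → MF A Ω

/-- Semantics of modal formulas over a deterministic Kripke model `(S, δ, γ)`. -/
def MF.sem {A Ω S : Type*} (δ : A → S → S) (γ : S → Set Ω) : MF A Ω → Set S
  | .obs ω => {s | ω ∈ γ s}
  | .dia a φ => {s | δ a s ∈ MF.sem δ γ φ}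
  | .top => Set.univ
  | .and φ ψ => MF.sem δ γ φ ∩ MF.sem δ γ ψ
  | .not φ => (MF.sem δ γ φ)ᶜ

/-!
Strengthen the claim to: for every word `w`, the preimage of `⟦φ⟧` under `δ* w` lies in `𝒞`.
Preimages commute with `∩` and `ᶜ`, and the diamond case is absorbed into the word, since
`δ* (w ++ [a]) = δ a ∘ δ* w`; for `φ = ω` the preimage is trace-definable. Take `w = []`.
-/

namespace MF

variable {A Ω S : Type*} (δ : A → S → S) (γ : S → Set Ω)

def run (w : List A) (s : S) : S := w.foldl (fun s a => δ a s) s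

@[simp]
lemma run_nil : run δ [] = (id : S → S) := rfl

lemma run_append_singleton (w : List A) (a : A) : run δ (w ++ [a]) = δ a ∘ run δ w := by
  funext s
  simp [run, List.foldl_append]

lemma preimage_run_sem_mem (𝒞 : Set (Set S))
    (htrace : ∀ (w : List A) (ω : Ω), run δ w ⁻¹' {s | ω ∈ γ s} ∈ 𝒞)
    (huniv : Set.univ ∈ 𝒞)
    (hcompl : ∀ U ∈ 𝒞, Uᶜ ∈ 𝒞)
    (hinter : ∀ U ∈ 𝒞, ∀ V ∈ 𝒞, U ∩ V ∈ 𝒞) (φ : MF A Ω) (w : List A) :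
    run δ w ⁻¹' sem δ γ φ ∈ 𝒞 := by
  induction φ generalizing w with
  | obs ω => exact htrace w ω
  | dia a φ ih =>
    have h := ih (w ++ [a])
    rwa [run_append_singleton, Set.preimage_comp] at h
  | top => simpa only [sem, Set.preimage_univ] using huniv
  | and φ ψ ihφ ihψ => exact hinter _ (ihφ w) _ (ihψ w)
  | not φ ih => exact hcompl _ (ih w)

end MF

/-- For every deterministic Kripke model `(S, δ, γ)` and every modal
formula `φ`, the definable set `⟦φ⟧` belongs to the smallest collection of subsets of
`S` containing every trace-definable subset and `Set.univ` and closed under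
complements and binary intersections: the Boolean algebra of modally definable
subsets is generated by the trace-definable subsets, so trace logic is as expressive
as the full modal logic. -/
theorem stmt_16 {A Ω S : Type*} (δ : A → S → S) (γ : S → Set Ω) (φ : MF A Ω)
    (𝒞 : Set (Set S))
    (htrace : ∀ (w : List A) (ω : Ω),
      {s : S | ω ∈ γ (w.foldl (fun s a => δ a s) s)} ∈ 𝒞)
    (huniv : Set.univ ∈ 𝒞)
    (hcompl : ∀ U ∈ 𝒞, Uᶜ ∈ 𝒞)
    (hinter : ∀ U ∈ 𝒞, ∀ V ∈ 𝒞, U ∩ V ∈ 𝒞) :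
    MF.sem δ γ φ ∈ 𝒞 := by
  simpa using MF.preimage_run_sem_mem δ γ 𝒞 htrace huniv hcompl hinter φ []
end

section
/- The double-powerset is the free complete atomic Boolean algebra: for every type X, every complete atomic Boolean algebra B, and every function f : X → B, there exists a unique function h : Set (Set X) → B such that h preserves arbitrary suprema (h (⋃₀ T) = sSup (h '' T) for every T : Set (Set (Set X))), h preserves complements (h (Aᶜ) = (h A)ᶜ for every A : Set (Set X)), and h (η x) = f x for every x : X, where η x = {a : Set X | x ∈ a}. -/
/-!
The elements `⨅ x, ±f x` of `B`, one for each sign pattern `a : Set X`, are pairwise disjoint and,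
by complete distributivity, join to `⊤`. Sending `A` to the join of the elements indexed by `A`
therefore preserves joins and complements, and it sends `η x` to `f x`. Conversely, a map `h`
preserving joins and complements preserves meets, so it sends `{a} = ⋂ x, ±η x` to the element
indexed by `a`; as `A` is the union of its singletons, `h` is determined.
-/

open Set Function

section PartitionOfUnity

variable {ι α : Type*} [CompleteBooleanAlgebra α]

theorem isCompl_biSup_biSup_compl {g : ι → α} (hdisj : Pairwise (Disjoint on g))
    (htop : ⨆ i, g i = ⊤) (s : Set ι) : IsCompl (⨆ i ∈ s, g i) (⨆ i ∈ sᶜ, g i) := by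
  refine ⟨?_, ?_⟩
  · simp only [iSup₂_disjoint_iff, disjoint_iSup₂_iff]
    exact fun j hj i hi => hdisj (ne_of_mem_of_not_mem hi hj)
  · rw [codisjoint_iff, ← iSup_union, union_compl_self, iSup_univ, htop]

end PartitionOfUnity

section SupComplHom

variable {Y α : Type*} [CompleteBooleanAlgebra α] {h : Set Y → α}
  (hsup : ∀ T : Set (Set Y), h (⋃₀ T) = sSup (h '' T))
include hsup

theorem map_iUnion_of_map_sUnion {ι : Sort*} (s : ι → Set Y) : h (⋃ i, s i) = ⨆ i, h (s i) := by
  rw [← sUnion_range, hsup, ← range_comp, sSup_range]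
  rfl

theorem map_iInter_of_map_sUnion_of_map_compl (hcompl : ∀ A : Set Y, h Aᶜ = (h A)ᶜ)
    {ι : Sort*} (s : ι → Set Y) : h (⋂ i, s i) = ⨅ i, h (s i) := by
  rw [← compl_compl (⋂ i, s i), compl_iInter, hcompl, map_iUnion_of_map_sUnion hsup, compl_iSup]
  simp only [hcompl, compl_compl]

theorem map_eq_biSup_singleton_of_map_sUnion (A : Set Y) : h A = ⨆ a ∈ A, h {a} := by
  conv_lhs => rw [← biUnion_of_singleton A]
  simp only [map_iUnion_of_map_sUnion hsup]

end SupComplHom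

namespace DoublePowerset

variable {X B : Type*}

section CompleteBooleanAlgebra

variable [CompleteBooleanAlgebra B] (f : X → B)

open Classical in
noncomputable def minterm (a : Set X) : B :=
  ⨅ x, if x ∈ a then f x else (f x)ᶜ

noncomputable def lift (A : Set (Set X)) : B :=
  ⨆ a ∈ A, minterm f a

variable {f}

theorem minterm_le_of_mem {a : Set X} {x : X} (hx : x ∈ a) : minterm f a ≤ f x :=
  (iInf_le _ x).trans (by simp [hx])

theorem minterm_le_compl_of_notMem {a : Set X} {x : X} (hx : x ∉ a) :
    minterm f a ≤ (f x)ᶜ :=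
  (iInf_le _ x).trans (by simp [hx])

theorem pairwise_disjoint_minterm : Pairwise (Disjoint on minterm f) := by
  intro a b hab
  obtain ⟨x, hx⟩ := not_forall.mp (mt Set.ext hab)
  by_cases hxa : x ∈ a
  · have hxb : x ∉ b := fun hxb => hx (iff_of_true hxa hxb)
    exact disjoint_compl_right.mono (minterm_le_of_mem hxa) (minterm_le_compl_of_notMem hxb)
  · have hxb : x ∈ b := not_not.mp fun hxb => hx (iff_of_false hxa hxb)
    exact disjoint_compl_left.mono (minterm_le_compl_of_notMem hxa) (minterm_le_of_mem hxb)

variable (f) in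
theorem lift_sUnion (T : Set (Set (Set X))) : lift f (⋃₀ T) = sSup (lift f '' T) := by
  rw [sSup_image, lift, iSup_sUnion]
  rfl

open Classical in
theorem singleton_eq_iInter (a : Set X) :
    {a} = ⋂ x, if x ∈ a then {s : Set X | x ∈ s} else {s : Set X | x ∈ s}ᶜ := by
  ext b
  simp only [mem_singleton_iff, mem_iInter, Set.ext_iff]
  refine forall_congr' fun x => ?_
  split_ifs with hx <;> simp [hx]

theorem eq_lift {h : Set (Set X) → B} (hsup : ∀ T : Set (Set (Set X)), h (⋃₀ T) = sSup (h '' T))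
    (hcompl : ∀ A : Set (Set X), h Aᶜ = (h A)ᶜ) (hη : ∀ x : X, h {a : Set X | x ∈ a} = f x) :
    h = lift f := by
  classical
  have h_singleton (a : Set X) : h {a} = minterm f a := by
    rw [singleton_eq_iInter, map_iInter_of_map_sUnion_of_map_compl hsup hcompl, minterm]
    congr with x
    split_ifs <;> simp only [hcompl, hη]
  funext A
  simp only [map_eq_biSup_singleton_of_map_sUnion hsup A, h_singleton, lift]

end CompleteBooleanAlgebra

section CompleteAtomicBooleanAlgebra

variable [CompleteAtomicBooleanAlgebra B] (f : X → B)

theorem iSup_minterm : ⨆ a, minterm f a = ⊤ := by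
  classical
  have hsplit : (⨅ x, ⨆ b : Bool, cond b (f x) (f x)ᶜ) = ⊤ := by
    simp [iSup_bool_eq]
  refine top_unique (hsplit ▸ iInf_iSup_eq.trans_le (iSup_le fun s => ?_))
  refine le_iSup_of_le {x | s x = true} (iInf_mono fun x => ?_)
  cases hsx : s x <;> simp [hsx]

theorem lift_compl (A : Set (Set X)) : lift f Aᶜ = (lift f A)ᶜ :=
  (isCompl_biSup_biSup_compl pairwise_disjoint_minterm (iSup_minterm f) A).symm.eq_compl

theorem lift_setOf_mem (x : X) : lift f {a | x ∈ a} = f x := by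
  refine le_antisymm (iSup₂_le fun _ hx => minterm_le_of_mem hx) ?_
  have hcompl : lift f {a | x ∈ a}ᶜ ≤ (f x)ᶜ := iSup₂_le fun _ hx => minterm_le_compl_of_notMem hx
  simpa only [lift_compl, compl_le_compl_iff_le] using hcompl

end CompleteAtomicBooleanAlgebra

end DoublePowerset

/-- The double powerset is the free complete atomic Boolean algebra:
for every type `X`, every complete atomic Boolean algebra `B` and every `f : X → B`,
there is a unique map `h : Set (Set X) → B` preserving arbitrary suprema and
complements and satisfying `h (η x) = f x` for all `x`, where `η x = {a | x ∈ a}`. -/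
theorem stmt_17 (X : Type*) (B : Type*) [CompleteAtomicBooleanAlgebra B] (f : X → B) :
    ∃! h : Set (Set X) → B,
      (∀ T : Set (Set (Set X)), h (⋃₀ T) = sSup (h '' T)) ∧
      (∀ A : Set (Set X), h Aᶜ = (h A)ᶜ) ∧
      (∀ x : X, h {a : Set X | x ∈ a} = f x) :=
  ⟨DoublePowerset.lift f,
    ⟨DoublePowerset.lift_sUnion f, DoublePowerset.lift_compl f, DoublePowerset.lift_setOf_mem f⟩,
    fun _ ⟨hsup, hcompl, hη⟩ => DoublePowerset.eq_lift hsup hcompl hη⟩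
end
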